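/- arXiv:2605.20545 — 2 statements merged into one kernel-verified Lean document; each statement's English description precedes it below -/
import Mathlib

section
/- Let μ be a probability measure on ℝ with finite second moment and ν another such measure. Suppose T is the monotone (nondecreasing) rearrangement map given by T = F_ν^{-1} ∘ F_μ, where F_μ, F_ν are cumulative distribution functions and μ is atomless. Then T pushes μ forward to ν and minimizes ∫ (S(x) − x)² dμ(x) over all measurable S with S_#μ = ν. -/
/-!
Write `T = q_ν ∘ F_μ`, where `q_ν u = inf {y | u ≤ F_ν y}` is the quantile function. Since `μ` has
no atoms, `F_μ` is continuous, so `μ {F_μ ≤ u} = u` on `[0, 1]` and `F_μ ∈ (0, 1)` almost surely;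
there `q_ν u ≤ t ↔ u ≤ F_ν t`. Hence `T⁻¹ (-∞, t]` is a.e. the lower set `{F_μ ≤ F_ν t}`, which
gives `T_#μ = ν`, and, lower sets of `ℝ` being nested,
`μ (x ≤ s, T x ≤ t) = min (F_μ s) (F_ν t)`: the largest value any `S` with `S_#μ = ν` can reach.

Expanding the square, `∫ (S x - x)² dμ = ∫ y² dν - 2 ∫ x S x dμ + ∫ x² dμ`, so it remains to see
`∫ x S x dμ ≤ ∫ x T x dμ`. Hoeffding's identity expresses `∫ x S x dμ` as an integral over `(s, t)`
of `μ (x ≤ s, S x ≤ t)` plus terms depending only on the marginals `μ` and `ν`, and the pointwise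
bound on the joint distribution functions gives the inequality.
-/

open MeasureTheory

open ProbabilityTheory Set Filter

lemma Monotone.exists_setOf_le_eq_Iic {F : ℝ → ℝ} (hF : Monotone F) (hc : Continuous F) {u : ℝ}
    (hlo : ∃ x, F x ≤ u) (hhi : ∃ y, u < F y) : ∃ m, F m = u ∧ {x | F x ≤ u} = Iic m := by
  obtain ⟨y, hy⟩ := hhi
  set A := {x | F x ≤ u}
  have hbdd : BddAbove A := ⟨y, fun x hx => (hF.reflect_lt (lt_of_le_of_lt hx hy)).le⟩
  have hm : sSup A ∈ A := (isClosed_le hc continuous_const).csSup_mem hlo hbdd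
  refine ⟨sSup A, le_antisymm hm ?_, ?_⟩
  · refine _root_.ge_of_tendsto (hc.continuousWithinAt (s := Ioi (sSup A)) (x := sSup A)).tendsto
      (eventually_nhdsWithin_of_forall fun x hx => le_of_not_ge fun h => ?_)
    exact (le_csSup hbdd h).not_gt hx
  · ext x
    exact ⟨fun hx => le_csSup hbdd hx, fun hx => (hF hx).trans hm⟩

section Atomless

variable (μ : Measure ℝ) [IsProbabilityMeasure μ] [NullSingletonClass μ]

lemma continuous_cdf : Continuous (cdf μ) := by
  refine continuous_iff_continuousAt.2 fun a => ?_
  rw [(monotone_cdf μ).continuousAt_iff_leftLim_eq_rightLim, (cdf μ).rightLim_eq]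
  have h : (cdf μ).measure {a} = 0 := by rw [measure_cdf]; exact measure_singleton a
  rw [StieltjesFunction.measure_singleton, ENNReal.ofReal_eq_zero, sub_nonpos] at h
  exact le_antisymm ((monotone_cdf μ).leftLim_le le_rfl) h

lemma measure_setOf_cdf_le {u : ℝ} (hu : u ≤ 1) : μ {x | cdf μ x ≤ u} = ENNReal.ofReal u := by
  rcases hu.eq_or_lt with rfl | hu
  · simp [cdf_le_one]
  by_cases hlo : ∃ x, cdf μ x ≤ u
  · obtain ⟨m, hm, hA⟩ := (monotone_cdf μ).exists_setOf_le_eq_Iic (continuous_cdf μ) hlo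
      ((tendsto_cdf_atTop μ).eventually_const_lt hu).exists
    rw [hA, ← ofReal_cdf, hm]
  · push Not at hlo
    have hu0 : u ≤ 0 := le_of_not_gt fun h =>
      let ⟨x, hx⟩ := ((tendsto_cdf_atBot μ).eventually_lt_const h).exists
      (hlo x).not_ge hx.le
    simp [(hlo _).not_ge, ENNReal.ofReal_eq_zero.2 hu0]

lemma measure_setOf_one_le_cdf : μ {x | 1 ≤ cdf μ x} = 0 := by
  suffices μ.real {x | 1 ≤ cdf μ x} ≤ 0 by
    simpa [measureReal_def, ENNReal.toReal_eq_zero_iff] using le_antisymm this measureReal_nonneg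
  refine le_of_forall_gt_imp_ge_of_dense fun ε hε => ?_
  have hsub : {x | 1 ≤ cdf μ x} ⊆ {x | cdf μ x ≤ 1 - ε}ᶜ :=
    fun x (hx : 1 ≤ cdf μ x) (h : cdf μ x ≤ 1 - ε) => by linarith
  have hmeas : MeasurableSet {x | cdf μ x ≤ 1 - ε} :=
    measurableSet_le (monotone_cdf μ).measurable measurable_const
  calc μ.real {x | 1 ≤ cdf μ x} ≤ μ.real {x | cdf μ x ≤ 1 - ε}ᶜ := measureReal_mono hsub
    _ = 1 - max (1 - ε) 0 := by
      rw [probReal_compl_eq_one_sub hmeas, measureReal_def,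
        measure_setOf_cdf_le μ (by linarith), ENNReal.toReal_ofReal']
    _ ≤ ε := by linarith [le_max_left (1 - ε) 0]

lemma ae_cdf_mem_Ioo : ∀ᵐ x ∂μ, cdf μ x ∈ Ioo 0 1 := by
  refine ae_iff.2 (measure_mono_null (fun x (hx : cdf μ x ∉ Ioo 0 1) => ?_) (measure_union_null
    (by simpa using measure_setOf_cdf_le μ zero_le_one) (measure_setOf_one_le_cdf μ)))
  rw [mem_Ioo, not_and_or, not_lt, not_lt] at hx
  exact hx

end Atomless

noncomputable def quantile (ν : Measure ℝ) (u : ℝ) : ℝ := sInf {y | u ≤ cdf ν y}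

lemma quantile_le_iff (ν : Measure ℝ) {u : ℝ} (h0 : 0 < u) (h1 : u < 1) (t : ℝ) :
    quantile ν u ≤ t ↔ u ≤ cdf ν t := by
  set A := {y | u ≤ cdf ν y}
  have hne : A.Nonempty := let ⟨y, hy⟩ := ((tendsto_cdf_atTop ν).eventually_const_lt h1).exists
    ⟨y, hy.le⟩
  have hbdd : BddBelow A := by
    obtain ⟨y₀, hy₀⟩ := ((tendsto_cdf_atBot ν).eventually_lt_const h0).exists
    exact ⟨y₀, fun y hy => ((monotone_cdf ν).reflect_lt (hy₀.trans_le hy)).le⟩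
  have hmem : sInf A ∈ A := by
    refine ge_of_tendsto (((cdf ν).right_continuous _).mono Ioi_subset_Ici_self).tendsto
      (eventually_nhdsWithin_of_forall fun x hx => ?_)
    obtain ⟨y, hyA, hyx⟩ := exists_lt_of_csInf_lt hne hx
    exact le_trans hyA (monotone_cdf ν hyx.le)
  exact ⟨fun h => le_trans hmem (monotone_cdf ν h), fun h => csInf_le hbdd h⟩

lemma quantile_eq_zero_of_notMem_Ioc (ν : Measure ℝ) {u : ℝ} (hu : u ∉ Ioc 0 1) :
    quantile ν u = 0 := by
  rcases le_or_gt u 0 with h | h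
  · have : {y | u ≤ cdf ν y} = univ := eq_univ_of_forall fun y => h.trans (cdf_nonneg ν y)
    rw [quantile, this, Real.sInf_univ]
  · have : {y | u ≤ cdf ν y} = ∅ := eq_empty_of_forall_notMem fun y hy =>
      hu ⟨h, hy.trans (cdf_le_one ν y)⟩
    rw [quantile, this, Real.sInf_empty]

lemma measurable_quantile (ν : Measure ℝ) : Measurable (quantile ν) := by
  refine measurable_of_restrict_of_restrict_compl (measurableSet_Ioo (a := (0 : ℝ)) (b := 1)) ?_ ?_
  · refine Monotone.measurable fun u v huv => ?_
    exact (quantile_le_iff ν u.2.1 u.2.2 _).2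
      ((Subtype.coe_le_coe.2 huv).trans ((quantile_le_iff ν v.2.1 v.2.2 _).1 le_rfl))
  · have : (Ioo (0 : ℝ) 1)ᶜ.domRestrict (quantile ν)
        = (Ioo (0 : ℝ) 1)ᶜ.domRestrict (fun u => if u = 1 then quantile ν 1 else 0) := by
      ext ⟨u, hu⟩
      simp only [domRestrict_apply]
      split_ifs with h
      · rw [h]
      · exact quantile_eq_zero_of_notMem_Ioc ν fun h' => hu ⟨h'.1, h'.2.lt_of_ne h⟩
    rw [this]
    exact Set.measurable_restrict_apply _
      (Measurable.ite (p := (· = 1)) (measurableSet_singleton 1) measurable_const measurable_const)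

lemma integrable_indicator_one_Ico (a b : ℝ) : Integrable ((Ico a b).indicator (1 : ℝ → ℝ)) :=
  (integrableOn_const measure_Ico_lt_top.ne).integrable_indicator measurableSet_Ico

/-- A signed layer-cake function: `∫ s, signedLayer x s = x`, so that `x * y` is the integral of
`signedLayer x s * signedLayer y t` over `(s, t)`. Integrating this against `μ` writes `∫ f g dμ`
through the joint distribution function `μ (f ≤ s, g ≤ t)` (Hoeffding's identity). -/
noncomputable def signedLayer (x s : ℝ) : ℝ := (Ici 0).indicator 1 s - (Iic s).indicator 1 x

lemma signedLayer_eq_indicator_sub_indicator (x : ℝ) :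
    signedLayer x = (Ico 0 x).indicator 1 - (Ico x 0).indicator 1 := by
  ext s
  simp only [signedLayer, Pi.sub_apply, indicator_apply, mem_Ici, mem_Iic, mem_Ico, Pi.one_apply]
  split_ifs <;> grind

lemma abs_signedLayer (x s : ℝ) :
    |signedLayer x s| = (Ico 0 x).indicator 1 s + (Ico x 0).indicator 1 s := by
  simp only [signedLayer, indicator_apply, mem_Ici, mem_Iic, mem_Ico, Pi.one_apply]
  split_ifs <;> grind

lemma measurable_signedLayer : Measurable (Function.uncurry signedLayer) :=
  (measurable_const.indicator (measurableSet_le measurable_const measurable_snd)).sub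
    (measurable_const.indicator (measurableSet_le measurable_fst measurable_snd))

lemma integrable_signedLayer (x : ℝ) : Integrable (signedLayer x) := by
  rw [signedLayer_eq_indicator_sub_indicator]
  exact (integrable_indicator_one_Ico 0 x).sub (integrable_indicator_one_Ico x 0)

lemma integral_signedLayer (x : ℝ) : ∫ s, signedLayer x s = x := by
  rw [signedLayer_eq_indicator_sub_indicator, integral_sub' (integrable_indicator_one_Ico 0 x)
    (integrable_indicator_one_Ico x 0), integral_indicator_one measurableSet_Ico,
    integral_indicator_one measurableSet_Ico, Real.volume_real_Ico, Real.volume_real_Ico, sub_zero,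
    zero_sub, max_zero_sub_max_neg_zero_eq_self]

lemma integral_abs_signedLayer (x : ℝ) : ∫ s, |signedLayer x s| = |x| := by
  simp_rw [abs_signedLayer]
  rw [integral_add (integrable_indicator_one_Ico 0 x) (integrable_indicator_one_Ico x 0),
    integral_indicator_one measurableSet_Ico, integral_indicator_one measurableSet_Ico,
    Real.volume_real_Ico, Real.volume_real_Ico, sub_zero, zero_sub,
    max_zero_add_max_neg_zero_eq_abs_self]

lemma integral_signedLayer_mul_signedLayer (x y : ℝ) :
    ∫ p : ℝ × ℝ, signedLayer x p.1 * signedLayer y p.2 = x * y := by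
  rw [Measure.volume_eq_prod, integral_prod_mul, integral_signedLayer, integral_signedLayer]

lemma integrable_signedLayer_mul_signedLayer (x y : ℝ) :
    Integrable (fun p : ℝ × ℝ => signedLayer x p.1 * signedLayer y p.2) := by
  rw [Measure.volume_eq_prod]
  exact (integrable_signedLayer x).mul_prod (integrable_signedLayer y)

lemma integral_norm_signedLayer_mul_signedLayer (x y : ℝ) :
    ∫ p : ℝ × ℝ, ‖signedLayer x p.1 * signedLayer y p.2‖ = |x| * |y| := by
  simp only [norm_mul, Real.norm_eq_abs]
  rw [Measure.volume_eq_prod, integral_prod_mul (fun s => |signedLayer x s|)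
    (fun t => |signedLayer y t|), integral_abs_signedLayer, integral_abs_signedLayer]

section Hoeffding

variable {α : Type*} [MeasurableSpace α] {μ : Measure α} {f g : α → ℝ}

lemma integrable_signedLayer_comp_mul_signedLayer_comp [SFinite μ] (hf : Measurable f)
    (hg : Measurable g) (hfg : Integrable (fun x => f x * g x) μ) :
    Integrable (fun z : α × ℝ × ℝ => signedLayer (f z.1) z.2.1 * signedLayer (g z.1) z.2.2)
      (μ.prod volume) := by
  have hmeas : Measurable fun z : α × ℝ × ℝ =>
      signedLayer (f z.1) z.2.1 * signedLayer (g z.1) z.2.2 :=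
    (measurable_signedLayer.comp ((hf.comp measurable_fst).prodMk measurable_snd.fst)).mul
      (measurable_signedLayer.comp ((hg.comp measurable_fst).prodMk measurable_snd.snd))
  refine (integrable_prod_iff hmeas.aestronglyMeasurable).2
    ⟨.of_forall fun x => integrable_signedLayer_mul_signedLayer (f x) (g x), ?_⟩
  simp only [integral_norm_signedLayer_mul_signedLayer, ← abs_mul]
  exact hfg.abs

lemma integral_mul_eq_integral_integral_signedLayer [SFinite μ] (hf : Measurable f)
    (hg : Measurable g) (hfg : Integrable (fun x => f x * g x) μ) :
    ∫ x, f x * g x ∂μ = ∫ p : ℝ × ℝ, ∫ x, signedLayer (f x) p.1 * signedLayer (g x) p.2 ∂μ := by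
  rw [← integral_integral_swap (integrable_signedLayer_comp_mul_signedLayer_comp hf hg hfg)]
  simp only [integral_signedLayer_mul_signedLayer]

lemma integral_signedLayer_comp_mul_signedLayer_comp [IsFiniteMeasure μ] (hf : Measurable f)
    (hg : Measurable g) (s t : ℝ) :
    ∫ x, signedLayer (f x) s * signedLayer (g x) t ∂μ
      = μ.real (f ⁻¹' Iic s ∩ g ⁻¹' Iic t) - (Ici 0).indicator 1 s * μ.real (g ⁻¹' Iic t)
        - (Ici 0).indicator 1 t * μ.real (f ⁻¹' Iic s)
        + (Ici 0).indicator 1 s * (Ici 0).indicator 1 t * μ.real univ := by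
  have hF : MeasurableSet (f ⁻¹' Iic s) := hf measurableSet_Iic
  have hG : MeasurableSet (g ⁻¹' Iic t) := hg measurableSet_Iic
  have hexpand : (fun x => signedLayer (f x) s * signedLayer (g x) t) = fun x =>
      (f ⁻¹' Iic s ∩ g ⁻¹' Iic t).indicator 1 x
        - (Ici 0).indicator 1 s * (g ⁻¹' Iic t).indicator 1 x
        - (Ici 0).indicator 1 t * (f ⁻¹' Iic s).indicator 1 x
        + (Ici 0).indicator 1 s * (Ici 0).indicator (1 : ℝ → ℝ) t := by
    ext x
    change ((Ici 0).indicator 1 s - (f ⁻¹' Iic s).indicator 1 x)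
      * ((Ici 0).indicator 1 t - (g ⁻¹' Iic t).indicator 1 x) = _
    rw [inter_indicator_one, Pi.mul_apply]
    ring
  have hF_int : Integrable ((f ⁻¹' Iic s).indicator (1 : α → ℝ)) μ :=
    (integrable_const 1).indicator hF
  have hG_int : Integrable ((g ⁻¹' Iic t).indicator (1 : α → ℝ)) μ :=
    (integrable_const 1).indicator hG
  have hFG_int : Integrable ((f ⁻¹' Iic s ∩ g ⁻¹' Iic t).indicator (1 : α → ℝ)) μ :=
    (integrable_const 1).indicator (hF.inter hG)
  rw [hexpand, integral_add, integral_sub, integral_sub, integral_const_mul, integral_const_mul,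
    integral_indicator_one (hF.inter hG), integral_indicator_one hF, integral_indicator_one hG,
    integral_const, smul_eq_mul, mul_comm (μ.real univ)]
  all_goals fun_prop

lemma integral_mul_le_integral_mul_of_measure_inter_le [IsFiniteMeasure μ] {g' : α → ℝ}
    (hf : Measurable f) (hg : Measurable g) (hg' : Measurable g')
    (hfg : Integrable (fun x => f x * g x) μ) (hfg' : Integrable (fun x => f x * g' x) μ)
    (hlaw : ∀ t, μ (g ⁻¹' Iic t) = μ (g' ⁻¹' Iic t))
    (hjoint : ∀ s t, μ (f ⁻¹' Iic s ∩ g ⁻¹' Iic t) ≤ μ (f ⁻¹' Iic s ∩ g' ⁻¹' Iic t)) :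
    ∫ x, f x * g x ∂μ ≤ ∫ x, f x * g' x ∂μ := by
  rw [integral_mul_eq_integral_integral_signedLayer hf hg hfg,
    integral_mul_eq_integral_integral_signedLayer hf hg' hfg']
  refine integral_mono
    (integrable_signedLayer_comp_mul_signedLayer_comp hf hg hfg).swap.integral_prod_left
    (integrable_signedLayer_comp_mul_signedLayer_comp hf hg' hfg').swap.integral_prod_left
    fun p => ?_
  simp only [integral_signedLayer_comp_mul_signedLayer_comp hf hg,
    integral_signedLayer_comp_mul_signedLayer_comp hf hg', measureReal_def, hlaw]
  linarith [ENNReal.toReal_mono (measure_ne_top _ _) (hjoint p.1 p.2)]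

end Hoeffding

lemma measure_inter_eq_min_of_isLowerSet {β : Type*} [LinearOrder β] [MeasurableSpace β]
    (μ : Measure β) {A B : Set β} (hA : IsLowerSet A) (hB : IsLowerSet B) :
    μ (A ∩ B) = min (μ A) (μ B) := by
  rcases hA.total hB with h | h
  · rw [inter_eq_left.2 h, min_eq_left (measure_mono h)]
  · rw [inter_eq_right.2 h, min_eq_right (measure_mono h)]

lemma memLp_two_of_map_eq {α : Type*} [MeasurableSpace α] {μ : Measure α} {ν : Measure ℝ}
    {R : α → ℝ} (hR : Measurable R) (hRν : μ.map R = ν) (hν : Integrable (fun y => y ^ 2) ν) :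
    MemLp R 2 μ := by
  subst hRν
  exact (memLp_map_measure_iff aestronglyMeasurable_id hR.aemeasurable).1
    ((memLp_two_iff_integrable_sq aestronglyMeasurable_id).2 hν)

lemma integrable_mul_of_map_eq {μ ν : Measure ℝ} {R : ℝ → ℝ} (hR : Measurable R)
    (hRν : μ.map R = ν) (hμ : Integrable (fun x => x ^ 2) μ) (hν : Integrable (fun y => y ^ 2) ν) :
    Integrable (fun x => x * R x) μ :=
  ((memLp_two_iff_integrable_sq aestronglyMeasurable_id).2 hμ).integrable_mul
    (memLp_two_of_map_eq hR hRν hν)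

lemma integral_sub_id_sq_of_map_eq {μ ν : Measure ℝ} {R : ℝ → ℝ} (hR : Measurable R)
    (hRν : μ.map R = ν) (hμ : Integrable (fun x => x ^ 2) μ) (hν : Integrable (fun y => y ^ 2) ν) :
    ∫ x, (R x - x) ^ 2 ∂μ = ∫ y, y ^ 2 ∂ν - 2 * ∫ x, x * R x ∂μ + ∫ x, x ^ 2 ∂μ := by
  have hR2 : Integrable (fun x => R x ^ 2) μ :=
    (memLp_two_iff_integrable_sq hR.aestronglyMeasurable).1 (memLp_two_of_map_eq hR hRν hν)
  have hxR := integrable_mul_of_map_eq hR hRν hμ hν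
  have hmom : ∫ x, R x ^ 2 ∂μ = ∫ y, y ^ 2 ∂ν := by
    rw [← hRν, integral_map hR.aemeasurable (by fun_prop)]
  have hexpand : (fun x => (R x - x) ^ 2) = fun x => R x ^ 2 - 2 * (x * R x) + x ^ 2 := by
    ext x; ring
  rw [hexpand, integral_add _ hμ, integral_sub hR2 (hxR.const_mul 2), integral_const_mul, hmom]
  exact hR2.sub (hxR.const_mul 2)

section MonotoneRearrangement

variable (μ ν : Measure ℝ) [IsProbabilityMeasure μ] [NullSingletonClass μ]

lemma preimage_quantile_comp_cdf_Iic_ae_eq (t : ℝ) :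
    (fun x => quantile ν (cdf μ x)) ⁻¹' Iic t =ᵐ[μ] {x | cdf μ x ≤ cdf ν t} := by
  filter_upwards [ae_cdf_mem_Ioo μ] with x hx
  exact propext (quantile_le_iff ν hx.1 hx.2 t)

lemma measure_preimage_quantile_comp_cdf_Iic [IsProbabilityMeasure ν] (t : ℝ) :
    μ ((fun x => quantile ν (cdf μ x)) ⁻¹' Iic t) = ν (Iic t) := by
  rw [measure_congr (preimage_quantile_comp_cdf_Iic_ae_eq μ ν t),
    measure_setOf_cdf_le μ (cdf_le_one ν t), ofReal_cdf]

lemma map_quantile_comp_cdf [IsProbabilityMeasure ν] :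
    μ.map (fun x => quantile ν (cdf μ x)) = ν := by
  have hmeas : Measurable fun x => quantile ν (cdf μ x) :=
    (measurable_quantile ν).comp (monotone_cdf μ).measurable
  have := Measure.isProbabilityMeasure_map (μ := μ) hmeas.aemeasurable
  refine Measure.ext_of_Iic _ _ fun t => ?_
  rw [Measure.map_apply hmeas measurableSet_Iic]
  exact measure_preimage_quantile_comp_cdf_Iic μ ν t

-- equality in the Fréchet–Hoeffding bound `μ (A ∩ B) ≤ min (μ A) (μ B)`
lemma measure_Iic_inter_preimage_quantile_comp_cdf_Iic [IsProbabilityMeasure ν] (s t : ℝ) :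
    μ (Iic s ∩ (fun x => quantile ν (cdf μ x)) ⁻¹' Iic t) = min (μ (Iic s)) (ν (Iic t)) := by
  rw [measure_congr ((ae_eq_refl _).inter (preimage_quantile_comp_cdf_Iic_ae_eq μ ν t)),
    measure_inter_eq_min_of_isLowerSet μ (B := {x | cdf μ x ≤ cdf ν t}) (isLowerSet_Iic s)
      (fun a b hba ha => (monotone_cdf μ hba).trans ha),
    measure_setOf_cdf_le μ (cdf_le_one ν t), ofReal_cdf]

end MonotoneRearrangement

/-- One-dimensional optimal transport: the monotone rearrangement
`T = F_ν⁻¹ ∘ F_μ` (with `μ` atomless) pushes `μ` forward to `ν` and minimizes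
the quadratic transport cost among all pushforward maps. -/
theorem monotone_rearrangement_optimal
    (μ ν : Measure ℝ) [IsProbabilityMeasure μ] [IsProbabilityMeasure ν]
    [NullSingletonClass μ]
    (hμ2 : Integrable (fun x => x ^ 2) μ) (hν2 : Integrable (fun x => x ^ 2) ν)
    (Fμ Fν : ℝ → ℝ)
    (hFμ : ∀ x, Fμ x = (μ (Set.Iic x)).toReal)
    (hFν : ∀ x, Fν x = (ν (Set.Iic x)).toReal)
    (T : ℝ → ℝ) (hT : ∀ x, T x = sInf {y : ℝ | Fμ x ≤ Fν y}) :
    μ.map T = ν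
    ∧ ∀ S : ℝ → ℝ, Measurable S → μ.map S = ν →
        ∫ x, (T x - x) ^ 2 ∂μ ≤ ∫ x, (S x - x) ^ 2 ∂μ := by
  have hT' : T = fun x => quantile ν (cdf μ x) := funext fun x => by
    simp only [hT, hFμ, hFν, quantile, cdf_eq_real, measureReal_def]
  have hTmeas : Measurable T := hT' ▸ (measurable_quantile ν).comp (monotone_cdf μ).measurable
  have hTν : μ.map T = ν := hT' ▸ map_quantile_comp_cdf μ ν
  refine ⟨hTν, fun S hS hSν => ?_⟩
  have hcov : ∫ x, x * S x ∂μ ≤ ∫ x, x * T x ∂μ := by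
    refine integral_mul_le_integral_mul_of_measure_inter_le measurable_id hS hTmeas
      (integrable_mul_of_map_eq hS hSν hμ2 hν2) (integrable_mul_of_map_eq hTmeas hTν hμ2 hν2)
      (fun t => ?_) (fun s t => ?_)
    · rw [← Measure.map_apply hS measurableSet_Iic, hSν, hT',
        measure_preimage_quantile_comp_cdf_Iic]
    · change μ (Iic s ∩ _) ≤ μ (Iic s ∩ _)
      rw [hT', measure_Iic_inter_preimage_quantile_comp_cdf_Iic, ← hSν,
        Measure.map_apply hS measurableSet_Iic]
      exact le_min (measure_mono inter_subset_left) (measure_mono inter_subset_right)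
  rw [integral_sub_id_sq_of_map_eq hTmeas hTν hμ2 hν2, integral_sub_id_sq_of_map_eq hS hSν hμ2 hν2]
  linarith
end

section
/- Let μ, ν be probability measures on ℝᵈ with μ absolutely continuous, and let T = ∇φ be the Brenier map from μ to ν for a convex function φ. If S : ℝᵈ → ℝᵈ is any map with S_#μ = ν, then ∫ |S(x) − x|² dμ(x) ≥ ∫ |T(x) − x|² dμ(x). -/
/-!
Write `T = ∇φ` and let `φ*` be the Legendre transform of `φ`. Expanding the squares,
`‖T x - x‖² - ‖S x - x‖² = ‖T x‖² - ‖S x‖² - 2⟪x, T x⟫ + 2⟪x, S x⟫`, and Fenchel–Young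
(`⟪x, y⟫ ≤ φ x + φ* y`, with equality at `y = ∇φ x` by convexity) bounds this by
`h (T x) - h (S x)` with `h = ‖·‖² - 2 φ*`. As `T x` and `S x` have the same law `ν`, this
difference has "mean zero". No moments are assumed, so that is made precise by truncation and
Fatou's lemma: for identically distributed `a`, `b` one has `∫ (a - b)⁺ ≤ ∫ (b - a)⁺`.
-/

open MeasureTheory Filter Topology Set
open scoped ENNReal RealInnerProductSpace

section IdenticallyDistributed

variable {α : Type*} [MeasurableSpace α] {μ : Measure α}

theorem lintegral_ofReal_sub_eq_of_map_eq {u v : α → ℝ} (hu : Integrable u μ)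
    (hv : Integrable v μ) (huv : μ.map u = μ.map v) :
    ∫⁻ x, ENNReal.ofReal (u x - v x) ∂μ = ∫⁻ x, ENNReal.ofReal (v x - u x) ∂μ := by
  have hmean : ∫ x, (u x - v x) ∂μ = 0 := by
    rw [integral_sub hu hv, sub_eq_zero]
    calc ∫ x, u x ∂μ = ∫ t, t ∂μ.map u :=
          (integral_map hu.aemeasurable aestronglyMeasurable_id).symm
      _ = ∫ x, v x ∂μ := huv ▸ integral_map hv.aemeasurable aestronglyMeasurable_id
  rw [integral_eq_lintegral_pos_part_sub_lintegral_neg_part (f := fun x => u x - v x) (hu.sub hv),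
    sub_eq_zero] at hmean
  simp only [neg_sub] at hmean
  exact (ENNReal.toReal_eq_toReal_iff' (hu.sub hv).lintegral_lt_top.ne
    (hv.sub hu).lintegral_lt_top.ne).1 hmean

lemma max_neg_min_sub_le (m a b : ℝ) :
    max (-m) (min m b) - max (-m) (min m a) ≤ max (b - a) 0 := by
  simp only [max_def, min_def]
  split_ifs <;> linarith

lemma eventually_max_neg_min_eq (t : ℝ) :
    ∀ᶠ m : ℕ in atTop, max (-(m : ℝ)) (min (m : ℝ) t) = t := by
  filter_upwards [eventually_ge_atTop ⌈|t|⌉₊] with m hm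
  have ht : |t| ≤ m := (Nat.le_ceil _).trans (Nat.cast_le.2 hm)
  rw [min_eq_right (abs_le.1 ht).2, max_eq_right (abs_le.1 ht).1]

/-- Truncating `a` and `b` at level `m` gives the equality for bounded variables; Fatou's lemma
passes to the limit on the left, while the truncated right-hand sides stay below `(b - a)⁺`. -/
theorem lintegral_ofReal_sub_le_of_map_eq [IsFiniteMeasure μ] {a b : α → ℝ}
    (ha : Measurable a) (hb : Measurable b) (hab : μ.map a = μ.map b) :
    ∫⁻ x, ENNReal.ofReal (a x - b x) ∂μ ≤ ∫⁻ x, ENNReal.ofReal (b x - a x) ∂μ := by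
  set c : ℕ → ℝ → ℝ := fun m t => max (-(m : ℝ)) (min (m : ℝ) t)
  have hc_meas : ∀ m, Measurable (c m) := fun m =>
    measurable_const.max (measurable_const.min measurable_id)
  have hc_int : ∀ m {f : α → ℝ}, Measurable f → Integrable (fun x => c m (f x)) μ :=
    fun m f hf =>
    Integrable.of_bound ((hc_meas m).comp hf).aestronglyMeasurable m
      (ae_of_all _ fun x => abs_le.2 ⟨le_max_left _ _, max_le (by simp) (min_le_left _ _)⟩)
  have hc_map : ∀ m, μ.map (fun x => c m (a x)) = μ.map (fun x => c m (b x)) := fun m => by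
    rw [← Function.comp_def, ← Measure.map_map (hc_meas m) ha, hab,
      Measure.map_map (hc_meas m) hb]
    rfl
  have hlim : ∀ x, Tendsto (fun m => ENNReal.ofReal (c m (a x) - c m (b x))) atTop
      (𝓝 (ENNReal.ofReal (a x - b x))) := fun x =>
    tendsto_const_nhds.congr' <| (((eventually_max_neg_min_eq (a x)).and
      (eventually_max_neg_min_eq (b x))).mono fun m hm => by simp only [c, hm.1, hm.2])
  calc ∫⁻ x, ENNReal.ofReal (a x - b x) ∂μ
      = ∫⁻ x, liminf (fun m => ENNReal.ofReal (c m (a x) - c m (b x))) atTop ∂μ :=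
        lintegral_congr fun x => (hlim x).liminf_eq.symm
    _ ≤ liminf (fun m => ∫⁻ x, ENNReal.ofReal (c m (a x) - c m (b x)) ∂μ) atTop :=
        lintegral_liminf_le fun m =>
          ENNReal.measurable_ofReal.comp (((hc_meas m).comp ha).sub ((hc_meas m).comp hb))
    _ = liminf (fun m => ∫⁻ x, ENNReal.ofReal (c m (b x) - c m (a x)) ∂μ) atTop := by
        simp only [lintegral_ofReal_sub_eq_of_map_eq (hc_int _ ha) (hc_int _ hb) (hc_map _)]
    _ ≤ ∫⁻ x, ENNReal.ofReal (b x - a x) ∂μ :=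
        liminf_le_of_frequently_le' <| Frequently.of_forall fun m => lintegral_mono fun x =>
          (ENNReal.ofReal_le_ofReal (max_neg_min_sub_le m (a x) (b x))).trans_eq (by simp)

theorem lintegral_ofReal_le_of_sub_le_sub_of_map_eq [IsFiniteMeasure μ] {a b F G : α → ℝ}
    (ha : Measurable a) (hb : Measurable b) (hab : μ.map a = μ.map b) (hG : ∀ x, 0 ≤ G x)
    (hGF : ∀ᵐ x ∂μ, G x - F x ≤ a x - b x) :
    ∫⁻ x, ENNReal.ofReal (G x) ∂μ ≤ ∫⁻ x, ENNReal.ofReal (F x) ∂μ := by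
  by_cases hF : ∫⁻ x, ENNReal.ofReal (F x) ∂μ = ∞
  · exact hF ▸ le_top
  have hba : ∫⁻ x, ENNReal.ofReal (b x - a x) ∂μ ≠ ∞ := ne_top_of_le_ne_top hF <|
    lintegral_mono_ae <| hGF.mono fun x hx => ENNReal.ofReal_le_ofReal (by linarith [hG x])
  refine ENNReal.le_of_add_le_add_right hba ?_
  calc ∫⁻ x, ENNReal.ofReal (G x) ∂μ + ∫⁻ x, ENNReal.ofReal (b x - a x) ∂μ
      = ∫⁻ x, (ENNReal.ofReal (G x) + ENNReal.ofReal (b x - a x)) ∂μ :=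
        (lintegral_add_right _ (ENNReal.measurable_ofReal.comp (hb.sub ha))).symm
    _ ≤ ∫⁻ x, (ENNReal.ofReal (F x) + ENNReal.ofReal (a x - b x)) ∂μ := lintegral_mono_ae <| by
        filter_upwards [hGF] with x hx
        rcases le_total (a x) (b x) with hle | hle
        · rw [← ENNReal.ofReal_add (hG x) (by linarith)]
          exact le_add_right (ENNReal.ofReal_le_ofReal (by linarith))
        · rw [ENNReal.ofReal_of_nonpos (p := b x - a x) (by linarith), add_zero]
          exact (ENNReal.ofReal_le_ofReal (by linarith)).trans ENNReal.ofReal_add_le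
    _ = ∫⁻ x, ENNReal.ofReal (F x) ∂μ + ∫⁻ x, ENNReal.ofReal (a x - b x) ∂μ :=
        lintegral_add_right _ (ENNReal.measurable_ofReal.comp (ha.sub hb))
    _ ≤ ∫⁻ x, ENNReal.ofReal (F x) ∂μ + ∫⁻ x, ENNReal.ofReal (b x - a x) ∂μ :=
        add_le_add le_rfl (lintegral_ofReal_sub_le_of_map_eq ha hb hab)

end IdenticallyDistributed

section Conjugate

variable {E : Type*} [NormedAddCommGroup E] [InnerProductSpace ℝ E]

theorem ConvexOn.inner_gradient_sub_le [CompleteSpace E] {φ : E → ℝ} (hφ : ConvexOn ℝ univ φ)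
    {x : E} (hd : DifferentiableAt ℝ φ x) (z : E) : ⟪gradient φ x, z - x⟫ ≤ φ z - φ x := by
  have hline : HasDerivAt (φ ∘ AffineMap.lineMap (k := ℝ) x z) ⟪gradient φ x, z - x⟫ 0 :=
    hd.hasGradientAt.hasFDerivAt.comp_hasDerivAt_of_eq 0 AffineMap.hasDerivAt_lineMap
      (AffineMap.lineMap_apply_zero x z).symm
  simpa [slope_def_field] using
    (hφ.comp_affineMap (AffineMap.lineMap x z)).le_slope_of_hasDerivAt
      (mem_univ 0) (mem_univ 1) zero_lt_one hline

theorem measurable_gradient [CompleteSpace E] [MeasurableSpace E] [BorelSpace E]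
    [SecondCountableTopology E] (φ : E → ℝ) : Measurable (gradient φ) :=
  (InnerProductSpace.toDual ℝ E).symm.continuous.measurable.comp (measurable_fderiv ℝ φ)

theorem ConvexOn.inner_sub_le_inner_gradient_sub [CompleteSpace E] {φ : E → ℝ}
    (hφ : ConvexOn ℝ univ φ) {x : E} (hd : DifferentiableAt ℝ φ x) (z : E) :
    ⟪z, gradient φ x⟫ - φ z ≤ ⟪x, gradient φ x⟫ - φ x := by
  have h := hφ.inner_gradient_sub_le hd z
  rw [inner_sub_right, real_inner_comm z, real_inner_comm x] at h
  linarith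

variable [TopologicalSpace.SeparableSpace E]

/-- The Legendre transform `φ* y = sup_z (⟪z, y⟫ - φ z)`, with the supremum taken over a dense
sequence so that `φ*` is measurable. It agrees with the true transform where the supremum is
finite (for continuous `φ`); elsewhere `⨆` returns the junk value `0`. -/
noncomputable def denseConjugate (φ : E → ℝ) (y : E) : ℝ :=
  ⨆ n, (⟪TopologicalSpace.denseSeq E n, y⟫ - φ (TopologicalSpace.denseSeq E n))

theorem measurable_denseConjugate [MeasurableSpace E] [BorelSpace E] (φ : E → ℝ) :
    Measurable (denseConjugate φ) :=
  Measurable.iSup fun _ => (continuous_const.inner continuous_id).measurable.sub_const _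

theorem measurableSet_bddAbove_denseConjugate [MeasurableSpace E] [BorelSpace E] (φ : E → ℝ) :
    MeasurableSet {y | BddAbove (range fun n =>
      ⟪TopologicalSpace.denseSeq E n, y⟫ - φ (TopologicalSpace.denseSeq E n))} :=
  measurableSet_bddAbove_range fun _ =>
    (continuous_const.inner continuous_id).measurable.sub_const _

theorem inner_sub_le_denseConjugate {φ : E → ℝ} (hφ : Continuous φ) {y : E}
    (hy : BddAbove (range fun n =>
      ⟪TopologicalSpace.denseSeq E n, y⟫ - φ (TopologicalSpace.denseSeq E n))) (x : E) :
    ⟪x, y⟫ - φ x ≤ denseConjugate φ y :=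
  (TopologicalSpace.denseRange_denseSeq E).induction_on x
    (isClosed_le ((continuous_id.inner continuous_const).sub hφ) continuous_const)
    fun n => le_ciSup hy n

theorem bddAbove_inner_sub_gradient [CompleteSpace E] {φ : E → ℝ} (hφ : ConvexOn ℝ univ φ)
    {x : E} (hd : DifferentiableAt ℝ φ x) :
    BddAbove (range fun n => ⟪TopologicalSpace.denseSeq E n, gradient φ x⟫ -
      φ (TopologicalSpace.denseSeq E n)) :=
  ⟨_, forall_mem_range.2 fun _ => hφ.inner_sub_le_inner_gradient_sub hd _⟩

theorem denseConjugate_gradient [CompleteSpace E] {φ : E → ℝ} (hφ : ConvexOn ℝ univ φ)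
    (hd : Differentiable ℝ φ) (x : E) : denseConjugate φ (gradient φ x) = ⟪x, gradient φ x⟫ - φ x :=
  le_antisymm (ciSup_le fun _ => hφ.inner_sub_le_inner_gradient_sub (hd x) _)
    (inner_sub_le_denseConjugate hd.continuous (bddAbove_inner_sub_gradient hφ (hd x)) x)

end Conjugate

theorem ae_mem_of_map_eq {α β : Type*} [MeasurableSpace α] [MeasurableSpace β] {μ : Measure α}
    {f g : α → β} (hf : AEMeasurable f μ) (hg : AEMeasurable g μ) (hfg : μ.map f = μ.map g)
    {s : Set β} (hs : MeasurableSet s) (hfs : ∀ᵐ x ∂μ, f x ∈ s) : ∀ᵐ x ∂μ, g x ∈ s :=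
  ae_of_ae_map hg (hfg ▸ (ae_map_iff hf hs).2 hfs)

theorem brenier_map_optimal_general
    {d : ℕ} (μ ν : Measure (EuclideanSpace ℝ (Fin d)))
    [IsProbabilityMeasure μ]
    (φ : EuclideanSpace ℝ (Fin d) → ℝ)
    (hφconv : ConvexOn ℝ Set.univ φ) (hφdiff : Differentiable ℝ φ)
    (hpush : μ.map (fun x => gradient φ x) = ν)
    (S : EuclideanSpace ℝ (Fin d) → EuclideanSpace ℝ (Fin d))
    (hS : Measurable S) (hSpush : μ.map S = ν) :
    ∫⁻ x, (‖gradient φ x - x‖₊ : ℝ≥0∞) ^ 2 ∂μ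
      ≤ ∫⁻ x, (‖S x - x‖₊ : ℝ≥0∞) ^ 2 ∂μ := by
  have hT : Measurable (gradient φ) := measurable_gradient φ
  have hTS : μ.map (gradient φ) = μ.map S := hpush.trans hSpush.symm
  -- `φ*` is finite at every `∇φ x`, hence, `S` having the same law, at almost every `S x`
  have hyoung : ∀ᵐ x ∂μ, ⟪x, S x⟫ - φ x ≤ denseConjugate φ (S x) :=
    (ae_mem_of_map_eq hT.aemeasurable hS.aemeasurable hTS
      (measurableSet_bddAbove_denseConjugate φ)
      (ae_of_all _ fun x => bddAbove_inner_sub_gradient hφconv (hφdiff x))).mono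
      fun x hx => inner_sub_le_denseConjugate hφdiff.continuous hx x
  set h : EuclideanSpace ℝ (Fin d) → ℝ := fun y => ‖y‖ ^ 2 - 2 * denseConjugate φ y
  have hh : Measurable h := (measurable_norm.pow_const 2).sub
    (measurable_const.mul (measurable_denseConjugate φ))
  have hmap : μ.map (h ∘ gradient φ) = μ.map (h ∘ S) := by
    rw [← Measure.map_map hh hT, hTS, Measure.map_map hh hS]
  have hsq : ∀ v : EuclideanSpace ℝ (Fin d), (‖v‖₊ : ℝ≥0∞) ^ 2 = ENNReal.ofReal (‖v‖ ^ 2) :=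
    fun v => by rw [ENNReal.ofReal_pow (norm_nonneg v), ofReal_norm, enorm_eq_nnnorm]
  simp only [hsq]
  refine lintegral_ofReal_le_of_sub_le_sub_of_map_eq (hh.comp hT) (hh.comp hS) hmap
    (fun x => sq_nonneg _) (hyoung.mono fun x hx => ?_)
  simp only [Function.comp, h, denseConjugate_gradient hφconv hφdiff x, norm_sub_sq_real,
    real_inner_comm x]
  linarith

/-- Optimality part of Brenier's theorem: if the gradient of a convex function
`φ` pushes the absolutely continuous measure `μ` forward to `ν`, then it
minimizes the quadratic transport cost among all pushforward maps. -/
theorem brenier_map_optimal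
    {d : ℕ} (μ ν : Measure (EuclideanSpace ℝ (Fin d)))
    [IsProbabilityMeasure μ] [IsProbabilityMeasure ν]
    (hac : μ ≪ volume)
    (φ : EuclideanSpace ℝ (Fin d) → ℝ)
    (hφconv : ConvexOn ℝ Set.univ φ) (hφdiff : Differentiable ℝ φ)
    (hpush : μ.map (fun x => gradient φ x) = ν)
    (S : EuclideanSpace ℝ (Fin d) → EuclideanSpace ℝ (Fin d))
    (hS : Measurable S) (hSpush : μ.map S = ν) :
    ∫⁻ x, (‖gradient φ x - x‖₊ : ℝ≥0∞) ^ 2 ∂μ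
      ≤ ∫⁻ x, (‖S x - x‖₊ : ℝ≥0∞) ^ 2 ∂μ :=
  brenier_map_optimal_general μ ν φ hφconv hφdiff hpush S hS hSpush
end
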